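/- arXiv:1803.07454 — 2 statements merged into one kernel-verified Lean document; each statement's English description precedes it below -/
import Mathlib

section
/- Let Y be a vector lattice and X a linear subspace of Y that is directed, order dense in Y, and generates Y as a vector lattice. Then for every y ∈ Y: 0 < y if and only if for every two nonempty finite sets A, B ⊆ {x ∈ X | 0 ≤ x} with y = (sup A) − (sup B) (suprema in Y) one has Aᵘ ⊊ Bᵘ (strict inclusion), where for M ⊆ X the set Mᵘ := {x ∈ X | ∀ m ∈ M, m ≤ x} denotes the upper bounds of M within X. -/
/-!
For a nonempty finite `A`, the upper bounds of `A` in `X` are `X ∩ Ici (sup A)`, and order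
density says that `a` is the infimum of `X ∩ Ici a`; hence `a ↦ X ∩ Ici a` reflects the order,
and `Aᵘ ⊊ Bᵘ` holds exactly when `sup B < sup A`, i.e. when `0 < sup A - sup B`. So the
condition on all positive representations of `y` is just `0 < y`, provided `y` has at least one
positive representation. One is obtained from any representation `y = sup A - sup B` with
`A, B ⊆ X` by translating `A` and `B` by a `z ∈ X` above all `-c`, `c ∈ A ∪ B`, which exists
because `X` is directed.
-/

open Set Pointwise

theorem DirectedOn.exists_forall_le_of_finset {α : Type*} [Preorder α] {s : Set α}
    (hs : DirectedOn (· ≤ ·) s) (hne : s.Nonempty) (t : Finset α) (ht : (t : Set α) ⊆ s) :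
    ∃ z ∈ s, ∀ c ∈ t, c ≤ z := by
  classical
  have : Nonempty s := hne.to_subtype
  obtain ⟨⟨z, hz⟩, hle⟩ := hs.directed_val.finset_le (t.subtype (· ∈ s))
  exact ⟨z, hz, fun c hc => hle ⟨c, ht hc⟩ (Finset.mem_subtype.mpr hc)⟩

theorem inter_Ici_subset_inter_Ici_iff {α : Type*} [Preorder α] {s : Set α} {a b : α}
    (ha : IsGLB (s ∩ Ici a) a) : s ∩ Ici a ⊆ s ∩ Ici b ↔ b ≤ a :=
  ⟨fun h => ha.2 fun _ hx => (h hx).2, fun hba _ hx => ⟨hx.1, hba.trans hx.2⟩⟩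

theorem inter_Ici_ssubset_inter_Ici_iff {α : Type*} [Preorder α] {s : Set α} {a b : α}
    (ha : IsGLB (s ∩ Ici a) a) (hb : IsGLB (s ∩ Ici b) b) : s ∩ Ici a ⊂ s ∩ Ici b ↔ b < a := by
  rw [ssubset_iff_subset_not_subset, inter_Ici_subset_inter_Ici_iff ha,
    inter_Ici_subset_inter_Ici_iff hb, lt_iff_le_not_ge]

theorem inter_upperBounds_ssubset_iff {α : Type*} [Lattice α] {s : Set α}
    (hdense : ∀ a, IsGLB (s ∩ Ici a) a) {A B : Finset α} (hA : A.Nonempty) (hB : B.Nonempty) :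
    s ∩ upperBounds ↑A ⊂ s ∩ upperBounds ↑B ↔ B.sup' hB id < A.sup' hA id := by
  rw [(Finset.isLUB_sup' hA).upperBounds_eq, (Finset.isLUB_sup' hB).upperBounds_eq]
  exact inter_Ici_ssubset_inter_Ici_iff (hdense _) (hdense _)

section LatticeOrderedGroup

variable {Y : Type*} [Lattice Y] [AddCommGroup Y] [AddLeftMono Y]

theorem Finset.sup'_image_add_right [DecidableEq Y] {A : Finset Y} (hA : A.Nonempty) (z : Y) :
    (A.image (· + z)).sup' (hA.image _) id = A.sup' hA id + z := by
  rw [Finset.sup'_image]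
  exact (map_finset_sup' (OrderIso.addRight z) hA id).symm

theorem AddSubgroup.exists_nonneg_sup'_sub_sup'_eq (S : AddSubgroup Y)
    (hS : DirectedOn (· ≤ ·) (S : Set Y)) {A B : Finset Y} (hA : A.Nonempty) (hB : B.Nonempty)
    (hAS : (A : Set Y) ⊆ S) (hBS : (B : Set Y) ⊆ S) :
    ∃ (A' B' : Finset Y) (hA' : A'.Nonempty) (hB' : B'.Nonempty),
      (A' : Set Y) ⊆ {x | x ∈ S ∧ 0 ≤ x} ∧ (B' : Set Y) ⊆ {x | x ∈ S ∧ 0 ≤ x} ∧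
      A'.sup' hA' id - B'.sup' hB' id = A.sup' hA id - B.sup' hB id := by
  classical
  obtain ⟨z, hzS, hz⟩ := hS.exists_forall_le_of_finset ⟨0, S.zero_mem⟩ (-(A ∪ B)) <| by
    rw [Finset.coe_neg, Finset.coe_union]
    exact fun c hc => neg_neg c ▸ S.neg_mem (union_subset hAS hBS hc)
  have hshift : ∀ C ⊆ A ∪ B, (C : Set Y) ⊆ S →
      ((C.image (· + z) : Finset Y) : Set Y) ⊆ {x | x ∈ S ∧ 0 ≤ x} := by
    rintro C hC hCS _ hx
    obtain ⟨c, hc, rfl⟩ := Finset.mem_image.mp hx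
    have hcz : -c ≤ z := hz (-c) (Finset.neg_mem_neg (hC hc))
    exact ⟨S.add_mem (hCS hc) hzS, neg_le_iff_add_nonneg'.mp hcz⟩
  refine ⟨A.image (· + z), B.image (· + z), hA.image _, hB.image _,
    hshift A Finset.subset_union_left hAS, hshift B Finset.subset_union_right hBS, ?_⟩
  rw [Finset.sup'_image_add_right, Finset.sup'_image_add_right, add_sub_add_right_eq_sub]

end LatticeOrderedGroup

theorem statement4_general
    {Y : Type*} [Lattice Y] [AddCommGroup Y] [Module ℝ Y]
    [CovariantClass Y Y (· + ·) (· ≤ ·)]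
    (X : Submodule ℝ Y)
    (hdir : ∀ x ∈ X, ∀ y ∈ X, ∃ z ∈ X, x ≤ z ∧ y ≤ z)
    (hdense : ∀ y : Y, IsGLB {x : Y | x ∈ X ∧ y ≤ x} y)
    (hgen : ∀ y : Y, ∃ A B : Finset Y, ∃ hA : A.Nonempty, ∃ hB : B.Nonempty,
      (↑A : Set Y) ⊆ (X : Set Y) ∧ (↑B : Set Y) ⊆ (X : Set Y) ∧
      y = A.sup' hA id - B.sup' hB id) :
    ∀ y : Y,
      0 < y ↔
        ∀ (A B : Finset Y) (hA : A.Nonempty) (hB : B.Nonempty),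
          (↑A : Set Y) ⊆ {x : Y | x ∈ X ∧ 0 ≤ x} →
          (↑B : Set Y) ⊆ {x : Y | x ∈ X ∧ 0 ≤ x} →
          y = A.sup' hA id - B.sup' hB id →
          {x : Y | x ∈ X ∧ ∀ a ∈ A, a ≤ x} ⊂ {x : Y | x ∈ X ∧ ∀ b ∈ B, b ≤ x} := by
  have hub_ssubset_iff := @inter_upperBounds_ssubset_iff _ _ (X : Set Y) hdense
  intro y
  constructor
  · rintro hy A B hA hB - - rfl
    exact (hub_ssubset_iff hA hB).mpr (sub_pos.mp hy)
  · intro h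
    obtain ⟨A₀, B₀, hA₀, hB₀, hA₀X, hB₀X, rfl⟩ := hgen y
    obtain ⟨A, B, hA, hB, hAX, hBX, heq⟩ :=
      X.toAddSubgroup.exists_nonneg_sup'_sub_sup'_eq hdir hA₀ hB₀ hA₀X hB₀X
    rw [← heq]
    exact sub_pos.mpr ((hub_ssubset_iff hA hB).mp (h A B hA hB hAX hBX heq.symm))

/-- Let `Y` be a vector lattice and `X` a directed, order dense linear
subspace of `Y` that generates `Y` as a vector lattice. Then for every `y ∈ Y`: `0 < y` iff
for all nonempty finite sets `A, B ⊆ {x ∈ X | 0 ≤ x}` with `y = sup A - sup B` one has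
`Aᵘ ⊊ Bᵘ` (strict inclusion), the upper bounds being taken within `X`. -/
theorem statement4
    {Y : Type*} [Lattice Y] [AddCommGroup Y] [Module ℝ Y]
    [CovariantClass Y Y (· + ·) (· ≤ ·)] [PosSMulMono ℝ Y]
    (X : Submodule ℝ Y)
    (hdir : ∀ x ∈ X, ∀ y ∈ X, ∃ z ∈ X, x ≤ z ∧ y ≤ z)
    (hdense : ∀ y : Y, IsGLB {x : Y | x ∈ X ∧ y ≤ x} y)
    (hgen : ∀ y : Y, ∃ A B : Finset Y, ∃ hA : A.Nonempty, ∃ hB : B.Nonempty,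
      (↑A : Set Y) ⊆ (X : Set Y) ∧ (↑B : Set Y) ⊆ (X : Set Y) ∧
      y = A.sup' hA id - B.sup' hB id) :
    ∀ y : Y,
      0 < y ↔
        ∀ (A B : Finset Y) (hA : A.Nonempty) (hB : B.Nonempty),
          (↑A : Set Y) ⊆ {x : Y | x ∈ X ∧ 0 ≤ x} →
          (↑B : Set Y) ⊆ {x : Y | x ∈ X ∧ 0 ≤ x} →
          y = A.sup' hA id - B.sup' hB id →
          {x : Y | x ∈ X ∧ ∀ a ∈ A, a ≤ x} ⊂ {x : Y | x ∈ X ∧ ∀ b ∈ B, b ≤ x} :=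
  statement4_general X hdir hdense hgen
end

section
/- Let Y be a vector lattice and X a linear subspace of Y that is directed, order dense in Y, and generates Y as a vector lattice. Then X is pervasive in Y if and only if for every two nonempty finite sets A, B ⊆ {x ∈ X | 0 ≤ x} with Aᵘ ⊊ Bᵘ (strict inclusion) there exists x ∈ X with 0 < x such that Aᵘ ⊆ ({x + b | b ∈ B})ᵘ. Here for M ⊆ X the set Mᵘ := {z ∈ X | ∀ m ∈ M, m ≤ z} denotes the upper bounds of M within X. -/
/-!
Upper bounds in `X` of a nonempty finite set `A` are the elements of `X` above `sup A`, and by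
order density these sets determine `sup A`: `X ∩ [s, ∞) ⊆ X ∩ [t, ∞)` iff `t ≤ s`. So the
condition says that whenever `sup B < sup A` for finite sets `A, B` of nonnegative elements of `X`,
some `0 < x ∈ X` satisfies `x ≤ sup A - sup B`. Since `X` generates `Y`, every `y` is such a
difference `sup A - sup B` with `A, B ⊆ X`, and directedness lets one translate `A` and `B` by a
common lower bound in `X` to make them nonnegative.
-/

open Set

section Preorder
variable {Y : Type*} [Preorder Y] {X : Set Y}

theorem inter_Ici_subset_inter_Ici_iff_s5 (hdense : ∀ y, IsGLB (X ∩ Ici y) y) {s t : Y} :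
    X ∩ Ici s ⊆ X ∩ Ici t ↔ t ≤ s :=
  ⟨fun h => (hdense s).2 fun _ hz => (h hz).2,
    fun hts => inter_subset_inter_right X (Ici_subset_Ici.2 hts)⟩

theorem inter_Ici_ssubset_inter_Ici_iff_s5 (hdense : ∀ y, IsGLB (X ∩ Ici y) y) {s t : Y} :
    X ∩ Ici s ⊂ X ∩ Ici t ↔ t < s := by
  rw [ssubset_iff_subset_not_subset, inter_Ici_subset_inter_Ici_iff_s5 hdense,
    inter_Ici_subset_inter_Ici_iff_s5 hdense, lt_iff_le_not_ge]

theorem DirectedOn.exists_mem_forall_le_of_coe_subset (hdir : DirectedOn (· ≤ ·) X)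
    (hX : X.Nonempty) (S : Finset Y) (hS : ↑S ⊆ X) : ∃ z ∈ X, ∀ a ∈ S, a ≤ z := by
  classical
  induction S using Finset.induction_on with
  | empty => simpa [Set.Nonempty] using hX
  | insert a S _ ih =>
    rw [Finset.coe_insert, insert_subset_iff] at hS
    obtain ⟨z, hzX, hz⟩ := ih hS.2
    obtain ⟨w, hwX, haw, hzw⟩ := hdir a hS.1 z hzX
    exact ⟨w, hwX, Finset.forall_mem_insert .. |>.2 ⟨haw, fun b hb => (hz b hb).trans hzw⟩⟩

end Preorder

section SetLike
variable {Y S : Type*} [SemilatticeSup Y] [SetLike S Y] {X : S}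

theorem setOf_mem_and_forall_le_eq (X : S) {A : Finset Y} (hA : A.Nonempty) :
    {z | z ∈ X ∧ ∀ a ∈ A, a ≤ z} = (X : Set Y) ∩ Ici (A.sup' hA id) := by
  ext z
  simp [Finset.sup'_le_iff]

theorem setOf_mem_and_forall_le_ssubset_iff (hdense : ∀ y, IsGLB {x | x ∈ X ∧ y ≤ x} y)
    {A B : Finset Y} (hA : A.Nonempty) (hB : B.Nonempty) :
    {z | z ∈ X ∧ ∀ a ∈ A, a ≤ z} ⊂ {z | z ∈ X ∧ ∀ b ∈ B, b ≤ z} ↔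
      B.sup' hB id < A.sup' hA id := by
  rw [setOf_mem_and_forall_le_eq X hA, setOf_mem_and_forall_le_eq X hB]
  exact inter_Ici_ssubset_inter_Ici_iff_s5 hdense

end SetLike

section OrderedAddCommGroup
variable {Y S : Type*} [SemilatticeSup Y] [AddCommGroup Y] [IsOrderedAddMonoid Y] [SetLike S Y]
  {X : S}

theorem setOf_mem_and_forall_add_le_eq (X : S) {B : Finset Y} (hB : B.Nonempty) (x : Y) :
    {z | z ∈ X ∧ ∀ b ∈ B, x + b ≤ z} = (X : Set Y) ∩ Ici (x + B.sup' hB id) := by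
  ext z
  simp only [mem_ofPred_eq, mem_inter_iff, SetLike.mem_coe, mem_Ici, ← le_neg_add_iff_add_le,
    Finset.sup'_le_iff, id]

theorem setOf_mem_and_forall_le_subset_iff (hdense : ∀ y, IsGLB {x | x ∈ X ∧ y ≤ x} y)
    {A B : Finset Y} (hA : A.Nonempty) (hB : B.Nonempty) (x : Y) :
    {z | z ∈ X ∧ ∀ a ∈ A, a ≤ z} ⊆ {z | z ∈ X ∧ ∀ b ∈ B, x + b ≤ z} ↔
      x ≤ A.sup' hA id - B.sup' hB id := by
  rw [setOf_mem_and_forall_le_eq X hA, setOf_mem_and_forall_add_le_eq X hB,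
    inter_Ici_subset_inter_Ici_iff_s5 hdense, le_sub_iff_add_le]

theorem Finset.sup'_image_sub_right [DecidableEq Y] {s : Finset Y} (hs : s.Nonempty) (u : Y) :
    (s.image (· - u)).sup' (hs.image _) id = s.sup' hs id - u := by
  simp only [Finset.sup'_image, sub_eq_add_neg]
  exact (map_finset_sup' (OrderIso.addRight (-u)) hs id).symm

variable [AddSubgroupClass S Y]

theorem exists_mem_forall_ge_of_directedOn (hdir : DirectedOn (· ≤ ·) (X : Set Y))
    (T : Finset Y) (hT : ↑T ⊆ (X : Set Y)) : ∃ u ∈ X, ∀ a ∈ T, u ≤ a := by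
  classical
  obtain ⟨z, hzX, hz⟩ := hdir.exists_mem_forall_le_of_coe_subset ⟨0, zero_mem X⟩ (T.image (- ·))
    (by rw [Finset.coe_image]; rintro _ ⟨a, ha, rfl⟩; exact neg_mem (hT ha))
  exact ⟨-z, neg_mem hzX, fun a ha => neg_le.1 (hz _ (Finset.mem_image_of_mem _ ha))⟩

theorem exists_nonneg_finset_sup'_sub_eq (hdir : DirectedOn (· ≤ ·) (X : Set Y))
    {A B : Finset Y} (hA : A.Nonempty) (hB : B.Nonempty)
    (hAX : ↑A ⊆ (X : Set Y)) (hBX : ↑B ⊆ (X : Set Y)) :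
    ∃ A' B' : Finset Y, ∃ hA' : A'.Nonempty, ∃ hB' : B'.Nonempty,
      ↑A' ⊆ {x | x ∈ X ∧ 0 ≤ x} ∧ ↑B' ⊆ {x | x ∈ X ∧ 0 ≤ x} ∧
      A'.sup' hA' id - B'.sup' hB' id = A.sup' hA id - B.sup' hB id := by
  classical
  obtain ⟨u, huX, hu⟩ := exists_mem_forall_ge_of_directedOn hdir (A ∪ B)
    (by rw [Finset.coe_union]; exact union_subset hAX hBX)
  have image_sub_nonneg (T : Finset Y) (hTX : ↑T ⊆ (X : Set Y)) (hT : T ⊆ A ∪ B) :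
      ↑(T.image (· - u)) ⊆ {x | x ∈ X ∧ 0 ≤ x} := by
    rw [Finset.coe_image]
    rintro _ ⟨a, ha, rfl⟩
    exact ⟨sub_mem (hTX ha) huX, sub_nonneg.2 (hu a (hT ha))⟩
  refine ⟨A.image (· - u), B.image (· - u), hA.image _, hB.image _,
    image_sub_nonneg A hAX Finset.subset_union_left,
    image_sub_nonneg B hBX Finset.subset_union_right, ?_⟩
  rw [Finset.sup'_image_sub_right, Finset.sup'_image_sub_right, sub_sub_sub_cancel_right]

end OrderedAddCommGroup

theorem statement5_general
    {Y : Type*} [Lattice Y] [AddCommGroup Y] [Module ℝ Y]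
    [CovariantClass Y Y (· + ·) (· ≤ ·)]
    (X : Submodule ℝ Y)
    (hdir : ∀ x ∈ X, ∀ y ∈ X, ∃ z ∈ X, x ≤ z ∧ y ≤ z)
    (hdense : ∀ y : Y, IsGLB {x : Y | x ∈ X ∧ y ≤ x} y)
    (hgen : ∀ y : Y, ∃ A B : Finset Y, ∃ hA : A.Nonempty, ∃ hB : B.Nonempty,
      (↑A : Set Y) ⊆ (X : Set Y) ∧ (↑B : Set Y) ⊆ (X : Set Y) ∧
      y = A.sup' hA id - B.sup' hB id) :
    (∀ y : Y, 0 < y → ∃ x ∈ X, 0 < x ∧ x ≤ y) ↔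
      ∀ A B : Finset Y, A.Nonempty → B.Nonempty →
        (↑A : Set Y) ⊆ {x : Y | x ∈ X ∧ 0 ≤ x} →
        (↑B : Set Y) ⊆ {x : Y | x ∈ X ∧ 0 ≤ x} →
        {z : Y | z ∈ X ∧ ∀ a ∈ A, a ≤ z} ⊂ {z : Y | z ∈ X ∧ ∀ b ∈ B, b ≤ z} →
        ∃ x ∈ X, 0 < x ∧
          {z : Y | z ∈ X ∧ ∀ a ∈ A, a ≤ z} ⊆ {z : Y | z ∈ X ∧ ∀ b ∈ B, x + b ≤ z} := by
  have : IsOrderedAddMonoid Y := { add_le_add_left := fun _ _ h c => add_le_add_left h c }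
  constructor
  · intro hperv A B hA hB _ _ hAB
    obtain ⟨x, hxX, hx0, hxle⟩ :=
      hperv _ (sub_pos.2 ((setOf_mem_and_forall_le_ssubset_iff hdense hA hB).1 hAB))
    exact ⟨x, hxX, hx0, (setOf_mem_and_forall_le_subset_iff hdense hA hB x).2 hxle⟩
  · intro hcond y hy
    obtain ⟨A₀, B₀, hA₀, hB₀, hA₀X, hB₀X, rfl⟩ := hgen y
    obtain ⟨A, B, hA, hB, hA0, hB0, hAB⟩ :=
      exists_nonneg_finset_sup'_sub_eq hdir hA₀ hB₀ hA₀X hB₀X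
    rw [← hAB] at hy ⊢
    obtain ⟨x, hxX, hx0, hsub⟩ := hcond A B hA hB hA0 hB0
      ((setOf_mem_and_forall_le_ssubset_iff hdense hA hB).2 (sub_pos.1 hy))
    exact ⟨x, hxX, hx0, (setOf_mem_and_forall_le_subset_iff hdense hA hB x).1 hsub⟩

/-- Let `Y` be a vector lattice and `X` a directed, order dense linear
subspace of `Y` that generates `Y` as a vector lattice. Then `X` is pervasive in `Y` iff
for all nonempty finite sets `A, B ⊆ {x ∈ X | 0 ≤ x}` with `Aᵘ ⊊ Bᵘ` there is `x ∈ X`,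
`0 < x`, with `Aᵘ ⊆ (x + B)ᵘ`, the upper bounds being taken within `X`. -/
theorem statement5
    {Y : Type*} [Lattice Y] [AddCommGroup Y] [Module ℝ Y]
    [CovariantClass Y Y (· + ·) (· ≤ ·)] [PosSMulMono ℝ Y]
    (X : Submodule ℝ Y)
    (hdir : ∀ x ∈ X, ∀ y ∈ X, ∃ z ∈ X, x ≤ z ∧ y ≤ z)
    (hdense : ∀ y : Y, IsGLB {x : Y | x ∈ X ∧ y ≤ x} y)
    (hgen : ∀ y : Y, ∃ A B : Finset Y, ∃ hA : A.Nonempty, ∃ hB : B.Nonempty,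
      (↑A : Set Y) ⊆ (X : Set Y) ∧ (↑B : Set Y) ⊆ (X : Set Y) ∧
      y = A.sup' hA id - B.sup' hB id) :
    (∀ y : Y, 0 < y → ∃ x ∈ X, 0 < x ∧ x ≤ y) ↔
      ∀ A B : Finset Y, A.Nonempty → B.Nonempty →
        (↑A : Set Y) ⊆ {x : Y | x ∈ X ∧ 0 ≤ x} →
        (↑B : Set Y) ⊆ {x : Y | x ∈ X ∧ 0 ≤ x} →
        {z : Y | z ∈ X ∧ ∀ a ∈ A, a ≤ z} ⊂ {z : Y | z ∈ X ∧ ∀ b ∈ B, b ≤ z} →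
        ∃ x ∈ X, 0 < x ∧
          {z : Y | z ∈ X ∧ ∀ a ∈ A, a ≤ z} ⊆ {z : Y | z ∈ X ∧ ∀ b ∈ B, x + b ≤ z} :=
  statement5_general X hdir hdense hgen
end
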